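/- Let Σ be a positive definite real symmetric d×d matrix and let U be a d×d orthogonal matrix. Then anscm(U Σ Uᵀ) = U · anscm(Σ) · Uᵀ. -/

import Mathlib

open MeasureTheory Matrix

noncomputable def gaussian {n : Type*} [Fintype n] [DecidableEq n] (S : Matrix n n ℝ) :
    Measure (n → ℝ) :=
  volume.withDensity fun x =>
    ENNReal.ofReal ((Real.sqrt ((2 * Real.pi) ^ (Fintype.card n) * S.det))⁻¹ *
      Real.exp (-(1 / 2) * (x ⬝ᵥ S⁻¹.mulVec x)))

/-- `anscm S` is the expected value of the normalized sample covariance matrix,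
`E[X Xᵀ / (Xᵀ X)]` for `X ∼ N(0, S)`, computed entrywise. -/
noncomputable def anscm {d : ℕ} (S : Matrix (Fin d) (Fin d) ℝ) : Matrix (Fin d) (Fin d) ℝ :=
  Matrix.of fun i j => ∫ x, (x i * x j) / (x ⬝ᵥ x) ∂ gaussian S

/-!
The density of `N(0, S)` depends on `x` only through `det S` and `xᵀ S⁻¹ x`, which do not change
under `x ↦ U x`, `S ↦ U S Uᵀ` for orthogonal `U`; as `x ↦ U x` also preserves Lebesgue measure,
`N(0, U S Uᵀ)` is the image of `N(0, S)` under `x ↦ U x`. The normalized sample covariance matrix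
is equivariant, `nscm (U x) = U (nscm x) Uᵀ`, and its entries are bounded by `1`, hence integrable
for `N(0, S)`, a finite measure: writing `S⁻¹ = Bᵀ B`, its density is a product of one-dimensional
Gaussians composed with `x ↦ B x`. Taking expectations entrywise gives the theorem.
-/

variable {n : Type*} [Fintype n]

section Orthogonal

variable [DecidableEq n] {U : Matrix n n ℝ}

lemma abs_det_of_mem_orthogonalGroup (hU : U ∈ orthogonalGroup n ℝ) : |U.det| = 1 := by
  have h : U.det * U.det = 1 := by
    simpa only [det_mul, det_transpose, det_one] using
      congrArg det ((mem_orthogonalGroup_iff n ℝ).mp hU)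
  rcases mul_self_eq_one_iff.mp h with h | h <;> simp [h]

lemma measurePreserving_mulVec_of_mem_orthogonalGroup (hU : U ∈ orthogonalGroup n ℝ) :
    MeasurePreserving (U *ᵥ ·) volume volume := by
  have hdet := abs_det_of_mem_orthogonalGroup hU
  refine ⟨(Continuous.matrix_mulVec continuous_const continuous_id).measurable, ?_⟩
  rw [show (U *ᵥ ·) = ⇑(toLin' U) from rfl,
    Real.map_matrix_volume_pi_eq_smul_volume_pi (by simp [← abs_ne_zero, hdet]), abs_inv, hdet]
  simp

lemma mulVec_dotProduct_mulVec_of_mem_orthogonalGroup (hU : U ∈ orthogonalGroup n ℝ)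
    (x y : n → ℝ) : U *ᵥ x ⬝ᵥ U *ᵥ y = x ⬝ᵥ y := by
  rw [dotProduct_mulVec, vecMul_mulVec, ← mulVec_transpose, (mem_orthogonalGroup_iff' n ℝ).mp hU,
    transpose_one, one_mulVec]

end Orthogonal

lemma integrable_exp_neg_mul_dotProduct_self {b : ℝ} (hb : 0 < b) :
    Integrable fun x : n → ℝ => Real.exp (-b * (x ⬝ᵥ x)) := by
  have h := Integrable.fintype_prod (𝕜 := ℝ) fun (_ : n) => integrable_exp_neg_mul_sq hb
  refine h.congr (Filter.Eventually.of_forall fun x => ?_)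
  simp only [← Real.exp_sum, dotProduct, Finset.mul_sum, sq]

section Gaussian

variable [DecidableEq n]

noncomputable def gaussianDensity (S : Matrix n n ℝ) (x : n → ℝ) : ℝ :=
  (Real.sqrt ((2 * Real.pi) ^ (Fintype.card n) * S.det))⁻¹ *
    Real.exp (-(1 / 2) * (x ⬝ᵥ S⁻¹.mulVec x))

lemma gaussian_eq_withDensity (S : Matrix n n ℝ) :
    gaussian S = volume.withDensity fun x => ENNReal.ofReal (gaussianDensity S x) :=
  rfl

lemma gaussianDensity_conj_mulVec_of_mem_orthogonalGroup (S : Matrix n n ℝ) {U : Matrix n n ℝ}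
    (hU : U ∈ orthogonalGroup n ℝ) (x : n → ℝ) :
    gaussianDensity (U * S * Uᵀ) (U *ᵥ x) = gaussianDensity S x := by
  have hUt : Uᵀ * U = 1 := (mem_orthogonalGroup_iff' n ℝ).mp hU
  have hdet : (U * S * Uᵀ).det = S.det := by
    rw [det_mul_comm, ← mul_assoc, hUt, one_mul]
  have hinv : (U * S * Uᵀ)⁻¹ = U * S⁻¹ * Uᵀ := by
    rw [Matrix.mul_inv_rev, Matrix.mul_inv_rev, ← transpose_nonsing_inv,
      inv_eq_right_inv ((mem_orthogonalGroup_iff n ℝ).mp hU), transpose_transpose, mul_assoc]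
  rw [gaussianDensity, gaussianDensity, hdet, hinv, ← mulVec_mulVec, ← mulVec_mulVec,
    mulVec_mulVec x Uᵀ U, hUt, one_mulVec, mulVec_dotProduct_mulVec_of_mem_orthogonalGroup hU]

lemma map_mulVec_gaussian_of_mem_orthogonalGroup (S : Matrix n n ℝ) {U : Matrix n n ℝ}
    (hU : U ∈ orthogonalGroup n ℝ) : (gaussian S).map (U *ᵥ ·) = gaussian (U * S * Uᵀ) := by
  have hU_pres := measurePreserving_mulVec_of_mem_orthogonalGroup hU
  ext s hs
  rw [Measure.map_apply hU_pres.measurable hs, gaussian_eq_withDensity, gaussian_eq_withDensity,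
    withDensity_apply _ (hU_pres.measurable hs), withDensity_apply _ hs,
    ← hU_pres.setLIntegral_comp_preimage hs (by unfold gaussianDensity; fun_prop)]
  simp_rw [gaussianDensity_conj_mulVec_of_mem_orthogonalGroup S hU]

lemma MeasureTheory.Integrable.comp_mulVec {E : Type*} [NormedAddCommGroup E] {g : (n → ℝ) → E}
    (hg : Integrable g) {B : Matrix n n ℝ} (hB : B.det ≠ 0) : Integrable fun x => g (B *ᵥ x) := by
  have hmap : Integrable g (volume.map (toLin' B)) := by
    rw [Real.map_matrix_volume_pi_eq_smul_volume_pi hB]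
    exact hg.smul_measure ENNReal.ofReal_ne_top
  exact hmap.comp_measurable (toLin' B).continuous_of_finiteDimensional.measurable

open scoped MatrixOrder in
lemma integrable_exp_neg_mul_dotProduct_mulVec {A : Matrix n n ℝ} (hA : A.PosDef) {b : ℝ}
    (hb : 0 < b) : Integrable fun x : n → ℝ => Real.exp (-b * (x ⬝ᵥ A *ᵥ x)) := by
  obtain ⟨B, rfl⟩ := CStarAlgebra.nonneg_iff_eq_star_mul_self.mp hA.posSemidef.nonneg
  have hB : B.det ≠ 0 := fun h => hA.det_pos.ne' (by simp [h])
  refine ((integrable_exp_neg_mul_dotProduct_self hb).comp_mulVec hB).congr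
    (Filter.Eventually.of_forall fun x => ?_)
  simp only [← mulVec_mulVec, dotProduct_mulVec x, star_eq_conjTranspose,
    conjTranspose_eq_transpose_of_trivial, vecMul_transpose]

lemma isFiniteMeasure_gaussian {S : Matrix n n ℝ} (hS : S.PosDef) : IsFiniteMeasure (gaussian S) :=
  isFiniteMeasure_withDensity_ofReal
    ((integrable_exp_neg_mul_dotProduct_mulVec hS.inv one_half_pos).const_mul _).2

end Gaussian

section NSCM

-- At `x = 0` every entry is `0 / 0 = 0`.
noncomputable def nscm (x : n → ℝ) : Matrix n n ℝ :=
  of fun i j => x i * x j / (x ⬝ᵥ x)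

lemma measurable_nscm_apply (i j : n) : Measurable fun x : n → ℝ => nscm x i j := by
  unfold nscm
  fun_prop

lemma abs_nscm_apply_le_one (x : n → ℝ) (i j : n) : |nscm x i j| ≤ 1 := by
  have hsq : ∀ k, x k * x k ≤ x ⬝ᵥ x := fun k =>
    Finset.single_le_sum (f := fun k => x k * x k) (fun k _ => mul_self_nonneg (x k))
      (Finset.mem_univ k)
  have hxx : 0 ≤ x ⬝ᵥ x := Finset.sum_nonneg fun k _ => mul_self_nonneg (x k)
  have hij : |x i * x j| ≤ x ⬝ᵥ x := abs_le.mpr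
    ⟨by nlinarith [sq_nonneg (x i + x j), hsq i, hsq j],
      by nlinarith [sq_nonneg (x i - x j), hsq i, hsq j]⟩
  rw [nscm, of_apply, abs_div, abs_of_nonneg hxx]
  exact div_le_one_of_le₀ hij hxx

lemma integrable_nscm_apply {μ : Measure (n → ℝ)} [IsFiniteMeasure μ] (i j : n) :
    Integrable (fun x => nscm x i j) μ :=
  .of_bound (measurable_nscm_apply i j).aestronglyMeasurable 1
    (Filter.Eventually.of_forall fun x => abs_nscm_apply_le_one x i j)

lemma nscm_mulVec_of_mem_orthogonalGroup [DecidableEq n] {U : Matrix n n ℝ}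
    (hU : U ∈ orthogonalGroup n ℝ) (x : n → ℝ) : nscm (U *ᵥ x) = U * nscm x * Uᵀ := by
  ext i j
  rw [nscm, of_apply, mulVec_dotProduct_mulVec_of_mem_orthogonalGroup hU]
  simp only [nscm, of_apply, mul_apply, transpose_apply, mulVec, dotProduct, Finset.sum_mul,
    Finset.mul_sum, Finset.sum_div]
  refine Finset.sum_congr rfl fun k _ => Finset.sum_congr rfl fun l _ => ?_
  ring

end NSCM

lemma integral_mul_mul_apply {α m m' l p : Type*} [Fintype m] [Fintype m'] [MeasurableSpace α]
    {μ : Measure α} {F : α → Matrix m m' ℝ} (hF : ∀ k l, Integrable (fun x => F x k l) μ)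
    (A : Matrix l m ℝ) (B : Matrix m' p ℝ) (i : l) (j : p) :
    ∫ x, (A * F x * B) i j ∂μ = (A * of (fun k l => ∫ x, F x k l ∂μ) * B) i j := by
  simp only [mul_apply, of_apply, Finset.sum_mul]
  rw [integral_finsetSum _ fun k _ => integrable_finsetSum _ fun l _ =>
    ((hF l k).const_mul _).mul_const _]
  refine Finset.sum_congr rfl fun k _ => ?_
  rw [integral_finsetSum _ fun l _ => ((hF l k).const_mul _).mul_const _]
  refine Finset.sum_congr rfl fun l _ => ?_
  rw [integral_mul_const, integral_const_mul]

theorem anscm_orthogonal_conj {d : ℕ} (S U : Matrix (Fin d) (Fin d) ℝ)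
    (hS : S.PosDef) (hU : U * Uᵀ = 1) :
    anscm (U * S * Uᵀ) = U * anscm S * Uᵀ := by
  have hU' : U ∈ orthogonalGroup (Fin d) ℝ := (mem_orthogonalGroup_iff (Fin d) ℝ).mpr hU
  have := isFiniteMeasure_gaussian hS
  ext i j
  calc anscm (U * S * Uᵀ) i j = ∫ x, nscm x i j ∂(gaussian S).map (U *ᵥ ·) := by
        rw [map_mulVec_gaussian_of_mem_orthogonalGroup S hU']; rfl
    _ = ∫ x, nscm (U *ᵥ x) i j ∂gaussian S :=
        integral_map (measurePreserving_mulVec_of_mem_orthogonalGroup hU').measurable.aemeasurable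
          (measurable_nscm_apply i j).aestronglyMeasurable
    _ = ∫ x, (U * nscm x * Uᵀ) i j ∂gaussian S := by
        simp_rw [nscm_mulVec_of_mem_orthogonalGroup hU']
    _ = (U * anscm S * Uᵀ) i j :=
        integral_mul_mul_apply (fun k l => integrable_nscm_apply k l) U Uᵀ i j
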